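/- arXiv:2512.12407 — 2 statements merged into one kernel-verified Lean document; each statement's English description precedes it below -/
import Mathlib

section
/- (Lemma 3.7.) For i = 1, …, q let C_i ∈ ℂ^{p_i×p_i} be a matrix in congruence canonical form given by explicit block data, i.e., C_i = ⊕_j J_{k_j^{(i)}}(0) ⊕ ⊕_j Γ_{ℓ_j^{(i)}} ⊕ ⊕_j H_{2m_j^{(i)}}(μ_j^{(i)}) ⊕ ⊕_j H_{2p_j^{(i)}}((−1)^{p_j^{(i)}}), where each μ_j^{(i)} satisfies |μ_j^{(i)}| > 1 or μ_j^{(i)} = e^{iθ} with 0 < θ < π, and let A_i belong to the closure of ℬᶜ(C_i). Suppose that 𝒮_Hᵀ(C_i) ∩ 𝒮_Hᵀ(C_j) = ∅ for all i ≠ j. Then A_1 ⊕ ⋯ ⊕ A_q belongs to the closure of ℬᶜ(C_1 ⊕ ⋯ ⊕ C_q). -/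
open Matrix

noncomputable section

/-- The `k × k` Jordan block `J_k(μ)` (eigenvalue `μ` on the diagonal, `1` on the
superdiagonal). -/
def Jblock (k : ℕ) (μ : ℂ) : Matrix (Fin k) (Fin k) ℂ :=
  Matrix.of fun i j =>
    if (j : ℕ) = (i : ℕ) then μ else if (j : ℕ) = (i : ℕ) + 1 then 1 else 0

/-- The `k × k` matrix `Γ_k`: in 1-based indexing, the `(i,j)` entry is `(-1)^(k-i)`
when `j = k+1-i` or `j = k+2-i`, and `0` otherwise. -/
def Gamma (k : ℕ) : Matrix (Fin k) (Fin k) ℂ :=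
  Matrix.of fun i j =>
    if (i : ℕ) + (j : ℕ) = k - 1 ∨ (i : ℕ) + (j : ℕ) = k then
      (-1 : ℂ) ^ (k - 1 - (i : ℕ)) else 0

/-- Block-diagonal direct sum of two square complex matrices. -/
def dsum {m n : ℕ} (A : Matrix (Fin m) (Fin m) ℂ) (B : Matrix (Fin n) (Fin n) ℂ) :
    Matrix (Fin (m + n)) (Fin (m + n)) ℂ :=
  Matrix.reindex finSumFinEquiv finSumFinEquiv (Matrix.fromBlocks A 0 0 B)

/-- The `2k × 2k` matrix `H_{2k}(μ) = [[0, I_k], [J_k(μ), 0]]`. -/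
def Hblock (k : ℕ) (μ : ℂ) : Matrix (Fin (k + k)) (Fin (k + k)) ℂ :=
  Matrix.reindex finSumFinEquiv finSumFinEquiv (Matrix.fromBlocks 0 1 (Jblock k μ) 0)

/-- The total size of a family of sizes `p : Fin q → ℕ`. -/
def finSize : {q : ℕ} → (Fin q → ℕ) → ℕ
  | 0, _ => 0
  | _ + 1, p => p 0 + finSize fun i => p i.succ

/-- Block-diagonal direct sum of a family of square complex matrices of sizes
`p 0, …, p (q-1)`. -/
def finDsum : {q : ℕ} → (p : Fin q → ℕ) →
    ((i : Fin q) → Matrix (Fin (p i)) (Fin (p i)) ℂ) →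
    Matrix (Fin (finSize p)) (Fin (finSize p)) ℂ
  | 0, _, _ => 0
  | _ + 1, p, M => dsum (M 0) (finDsum (fun i => p i.succ) fun i => M i.succ)

/-- A complex number `μ` is a valid Type II-(a) parameter when `|μ| > 1` or
`μ = e^(iθ)` with `0 < θ < π`. -/
def TypeIIaParam (μ : ℂ) : Prop :=
  1 < ‖μ‖ ∨ ∃ θ : ℝ, 0 < θ ∧ θ < Real.pi ∧ μ = Complex.exp ((θ : ℂ) * Complex.I)

/-- Block data of a matrix in congruence canonical form
`⊕ J_{k_j}(0) ⊕ ⊕ Γ_{l_j} ⊕ ⊕ H_{2 m_j}(μ_j) ⊕ ⊕ H_{2 p_j}((-1)^{p_j})`. -/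
structure CongData : Type where
  n1 : ℕ
  n2 : ℕ
  n3 : ℕ
  n4 : ℕ
  k : Fin n1 → ℕ
  l : Fin n2 → ℕ
  m : Fin n3 → ℕ
  mu : Fin n3 → ℂ
  p : Fin n4 → ℕ

/-- The size of the canonical matrix described by the block data. -/
def CongData.size (d : CongData) : ℕ :=
  finSize d.k +
    (finSize d.l + (finSize (fun i => d.m i + d.m i) + finSize fun i => d.p i + d.p i))

/-- The canonical matrix with the block structure of `d` but with the Type II-(a)
parameters replaced by `mu`. -/
def CongData.matWith (d : CongData) (mu : Fin d.n3 → ℂ) :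
    Matrix (Fin d.size) (Fin d.size) ℂ :=
  dsum (finDsum d.k fun i => Jblock (d.k i) 0)
    (dsum (finDsum d.l fun i => Gamma (d.l i))
      (dsum (finDsum (fun i => d.m i + d.m i) fun i => Hblock (d.m i) (mu i))
        (finDsum (fun i => d.p i + d.p i) fun i => Hblock (d.p i) ((-1) ^ d.p i))))

/-- Validity of the block data: all the sizes are at least `1` and every `μ_j`
satisfies `|μ_j| > 1` or `μ_j = e^(iθ)` with `0 < θ < π`. -/
def CongData.Valid (d : CongData) : Prop :=
  (∀ i, 1 ≤ d.k i) ∧ (∀ i, 1 ≤ d.l i) ∧ (∀ i, 1 ≤ d.m i) ∧ (∀ i, 1 ≤ d.p i) ∧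
    ∀ i, TypeIIaParam (d.mu i)

/-- The constraints that the replaced parameters must satisfy in the definition of the
congruence bundle of `d`. -/
def CongData.ParamsOK (d : CongData) (mu : Fin d.n3 → ℂ) : Prop :=
  (∀ i, TypeIIaParam (mu i)) ∧ ∀ i j, mu i ≠ mu j ↔ d.mu i ≠ d.mu j

/-- The congruence bundle `ℬᶜ(C)` of the canonical matrix `C` described by the block
data `d`. -/
def congBundle (d : CongData) : Set (Matrix (Fin d.size) (Fin d.size) ℂ) :=
  {A | ∃ (mu : Fin d.n3 → ℂ) (P : Matrix (Fin d.size) (Fin d.size) ℂ),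
    IsUnit P ∧ d.ParamsOK mu ∧ A = P * d.matWith mu * Pᵀ}

/-- The parameter set `𝒮ᵀ_H(C) = {μ_j : 1 ≤ j ≤ n3}`. -/
def CongData.SH (d : CongData) : Set ℂ := Set.range d.mu

/-- The direct sum of two canonical matrices: concatenation of the block data. -/
def CongData.append (d e : CongData) : CongData :=
  ⟨d.n1 + e.n1, d.n2 + e.n2, d.n3 + e.n3, d.n4 + e.n4, Fin.append d.k e.k,
    Fin.append d.l e.l, Fin.append d.m e.m, Fin.append d.mu e.mu, Fin.append d.p e.p⟩

/-- The direct sum `C_1 ⊕ ⋯ ⊕ C_q` of a family of canonical matrices: concatenation of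
the block data. -/
def appendAll : {q : ℕ} → (Fin q → CongData) → CongData
  | 0, _ => ⟨0, 0, 0, 0, Fin.elim0, Fin.elim0, Fin.elim0, Fin.elim0, Fin.elim0⟩
  | _ + 1, C => CongData.append (C 0) (appendAll fun i => C i.succ)

/-!
Congruence bundles, and hence their closures, are invariant under congruence `X ↦ P X Pᵀ`, and
the direct sum of two canonical matrices is permutation-congruent to the canonical matrix of the
concatenated block data. For two summands it is therefore enough to treat
`A = P C(μ) Pᵀ` and `B = Q C'(ν) Qᵀ`. Every admissible parameter is an accumulation point of
admissible parameters, so `ν` is a limit of admissible `ν'` with the same coincidence pattern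
that avoid the finitely many values of `μ`. Since the parameter sets of `C` and `C'` are disjoint,
`(μ, ν')` is then an admissible parameter tuple for the concatenated data, so
`C(μ) ⊕ C'(ν')` lies in its bundle; letting `ν' → ν` and using continuity of the direct sum
gives the case of two summands, and induction on `q` the general case.
-/

section PermCong

def PermCong {m n : ℕ} (A : Matrix (Fin m) (Fin m) ℂ) (B : Matrix (Fin n) (Fin n) ℂ) : Prop :=
  ∃ e : Fin m ≃ Fin n, reindex e e A = B

namespace PermCong

variable {m n p : ℕ} {A : Matrix (Fin m) (Fin m) ℂ} {B : Matrix (Fin n) (Fin n) ℂ}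
  {C : Matrix (Fin p) (Fin p) ℂ}

@[refl]
theorem refl (A : Matrix (Fin m) (Fin m) ℂ) : PermCong A A :=
  ⟨Equiv.refl _, reindex_refl_refl A⟩

@[symm]
theorem symm (h : PermCong A B) : PermCong B A := by
  obtain ⟨e, rfl⟩ := h
  exact ⟨e.symm, by simp⟩

@[trans]
theorem trans (h₁ : PermCong A B) (h₂ : PermCong B C) : PermCong A C := by
  obtain ⟨e₁, rfl⟩ := h₁
  obtain ⟨e₂, rfl⟩ := h₂
  exact ⟨e₁.trans e₂, by simp⟩

theorem reindex_finCongr (h : m = n) : PermCong A (reindex (finCongr h) (finCongr h) A) :=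
  ⟨_, rfl⟩

end PermCong

end PermCong

section DsumPermutations

variable {m n p : ℕ} (A : Matrix (Fin m) (Fin m) ℂ) (B : Matrix (Fin n) (Fin n) ℂ)

@[simp]
theorem dsum_apply_castAdd_castAdd (i j : Fin m) :
    dsum A B (Fin.castAdd n i) (Fin.castAdd n j) = A i j := by
  simp [dsum]

@[simp]
theorem dsum_apply_castAdd_natAdd (i : Fin m) (j : Fin n) :
    dsum A B (Fin.castAdd n i) (Fin.natAdd m j) = 0 := by
  simp [dsum]

@[simp]
theorem dsum_apply_natAdd_castAdd (i : Fin n) (j : Fin m) :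
    dsum A B (Fin.natAdd m i) (Fin.castAdd n j) = 0 := by
  simp [dsum]

@[simp]
theorem dsum_apply_natAdd_natAdd (i j : Fin n) :
    dsum A B (Fin.natAdd m i) (Fin.natAdd m j) = B i j := by
  simp [dsum]

theorem permCong_dsum_comm : PermCong (dsum A B) (dsum B A) := by
  refine ⟨finSumFinEquiv.symm.trans ((Equiv.sumComm _ _).trans finSumFinEquiv), ?_⟩
  ext i j
  refine Fin.addCases (fun i => ?_) (fun i => ?_) i <;>
    refine Fin.addCases (fun j => ?_) (fun j => ?_) j <;> simp

theorem permCong_dsum_assoc (C : Matrix (Fin p) (Fin p) ℂ) :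
    PermCong (dsum (dsum A B) C) (dsum A (dsum B C)) := by
  refine ⟨finSumFinEquiv.symm.trans ((finSumFinEquiv.symm.sumCongr (Equiv.refl _)).trans
    ((Equiv.sumAssoc _ _ _).trans (((Equiv.refl _).sumCongr finSumFinEquiv).trans
      finSumFinEquiv))), ?_⟩
  ext i j
  refine Fin.addCases (fun i => ?_) (fun i => Fin.addCases (fun i => ?_) (fun i => ?_) i) i <;>
    refine Fin.addCases (fun j => ?_) (fun j => Fin.addCases (fun j => ?_) (fun j => ?_) j) j <;>
      simp

end DsumPermutations

theorem PermCong.dsum_congr {m n m' n' : ℕ} {A : Matrix (Fin m) (Fin m) ℂ}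
    {B : Matrix (Fin n) (Fin n) ℂ} {A' : Matrix (Fin m') (Fin m') ℂ}
    {B' : Matrix (Fin n') (Fin n') ℂ} (hA : PermCong A A') (hB : PermCong B B') :
    PermCong (dsum A B) (dsum A' B') := by
  obtain ⟨e₁, rfl⟩ := hA
  obtain ⟨e₂, rfl⟩ := hB
  refine ⟨finSumFinEquiv.symm.trans ((e₁.sumCongr e₂).trans finSumFinEquiv), ?_⟩
  ext i j
  refine Fin.addCases (fun i => ?_) (fun i => ?_) i <;>
    refine Fin.addCases (fun j => ?_) (fun j => ?_) j <;> simp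

section BlockLists

abbrev SizedMatrix := (n : ℕ) × Matrix (Fin n) (Fin n) ℂ

def listSize : List SizedMatrix → ℕ
  | [] => 0
  | x :: L => x.1 + listSize L

def listDsum : (L : List SizedMatrix) → Matrix (Fin (listSize L)) (Fin (listSize L)) ℂ
  | [] => 0
  | x :: L => dsum x.2 (listDsum L)

theorem permCong_finDsum_listDsum_ofFn : ∀ {q : ℕ} (s : Fin q → SizedMatrix),
    PermCong (finDsum (fun i => (s i).1) fun i => (s i).2) (listDsum (List.ofFn s))
  | 0, _ => ⟨Equiv.refl _, by ext i; exact i.elim0⟩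
  | _ + 1, s => by
    rw [List.ofFn_succ]
    exact (PermCong.refl (s 0).2).dsum_congr (permCong_finDsum_listDsum_ofFn fun i => s i.succ)

theorem permCong_dsum_fin_zero_left {n : ℕ} (Z : Matrix (Fin 0) (Fin 0) ℂ)
    (B : Matrix (Fin n) (Fin n) ℂ) : PermCong (dsum Z B) B := by
  refine ⟨finCongr (Nat.zero_add n), ?_⟩
  have hcast (k : Fin n) : (finCongr (Nat.zero_add n)).symm k = Fin.natAdd 0 k :=
    Fin.ext (Nat.zero_add _).symm
  ext i j
  rw [reindex_apply, submatrix_apply, hcast, hcast]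
  exact dsum_apply_natAdd_natAdd Z B i j

theorem permCong_dsum_listDsum_append (L₁ L₂ : List SizedMatrix) :
    PermCong (dsum (listDsum L₁) (listDsum L₂)) (listDsum (L₁ ++ L₂)) := by
  induction L₁ with
  | nil => exact permCong_dsum_fin_zero_left _ _
  | cons x L₁ ih => exact (permCong_dsum_assoc _ _ _).trans ((PermCong.refl x.2).dsum_congr ih)

theorem List.Perm.permCong_listDsum {L₁ L₂ : List SizedMatrix} (h : L₁.Perm L₂) :
    PermCong (listDsum L₁) (listDsum L₂) := by
  induction h with
  | nil => rfl
  | cons x _ ih => exact (PermCong.refl x.2).dsum_congr ih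
  | swap x y L =>
    exact (permCong_dsum_assoc y.2 x.2 _).symm.trans
      (((permCong_dsum_comm y.2 x.2).dsum_congr (PermCong.refl _)).trans
        (permCong_dsum_assoc _ _ _))
  | trans _ _ ih₁ ih₂ => exact ih₁.trans ih₂

theorem PermCong.dsum_listDsum_append {m n : ℕ} {A : Matrix (Fin m) (Fin m) ℂ}
    {B : Matrix (Fin n) (Fin n) ℂ} {L₁ L₂ : List SizedMatrix}
    (hA : PermCong A (listDsum L₁)) (hB : PermCong B (listDsum L₂)) :
    PermCong (dsum A B) (listDsum (L₁ ++ L₂)) :=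
  (hA.dsum_congr hB).trans (permCong_dsum_listDsum_append L₁ L₂)

def SizedMatrix.jordan (n : ℕ) : SizedMatrix := ⟨n, Jblock n 0⟩

def SizedMatrix.gamma (n : ℕ) : SizedMatrix := ⟨n, Gamma n⟩

def SizedMatrix.hblock (n : ℕ) (μ : ℂ) : SizedMatrix := ⟨n + n, Hblock n μ⟩

def CongData.blocks (d : CongData) (mu : Fin d.n3 → ℂ) : List SizedMatrix :=
  List.ofFn (fun i => .jordan (d.k i)) ++ (List.ofFn (fun i => .gamma (d.l i)) ++
    (List.ofFn (fun i => .hblock (d.m i) (mu i)) ++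
      List.ofFn fun i => .hblock (d.p i) ((-1) ^ d.p i)))

theorem CongData.permCong_matWith_listDsum_blocks (d : CongData) (mu : Fin d.n3 → ℂ) :
    PermCong (d.matWith mu) (listDsum (d.blocks mu)) :=
  (permCong_finDsum_listDsum_ofFn fun i => .jordan (d.k i)).dsum_listDsum_append <|
    (permCong_finDsum_listDsum_ofFn fun i => .gamma (d.l i)).dsum_listDsum_append <|
      (permCong_finDsum_listDsum_ofFn fun i => .hblock (d.m i) (mu i)).dsum_listDsum_append
        (permCong_finDsum_listDsum_ofFn fun i => .hblock (d.p i) ((-1) ^ d.p i))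

theorem CongData.blocks_append_perm (d e : CongData) (mu : Fin d.n3 → ℂ)
    (nu : Fin e.n3 → ℂ) :
    ((d.append e).blocks (Fin.append mu nu)).Perm (d.blocks mu ++ e.blocks nu) := by
  simp only [CongData.blocks, CongData.append, List.ofFn_add, Fin.append_left', Fin.append_right]
  rw [← Multiset.coe_eq_coe]
  simp only [← Multiset.coe_add]
  abel

theorem CongData.permCong_matWith_append (d e : CongData) (mu : Fin d.n3 → ℂ)
    (nu : Fin e.n3 → ℂ) :
    PermCong ((d.append e).matWith (Fin.append mu nu)) (dsum (d.matWith mu) (e.matWith nu)) :=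
  ((d.append e).permCong_matWith_listDsum_blocks _).trans <|
    (d.blocks_append_perm e mu nu).permCong_listDsum.trans
      ((d.permCong_matWith_listDsum_blocks mu).dsum_listDsum_append
        (e.permCong_matWith_listDsum_blocks nu)).symm

theorem PermCong.size_eq {m n : ℕ} {A : Matrix (Fin m) (Fin m) ℂ}
    {B : Matrix (Fin n) (Fin n) ℂ} (h : PermCong A B) : m = n :=
  let ⟨e, _⟩ := h; Fin.equiv_iff_eq.mp ⟨e⟩

theorem CongData.size_append (d e : CongData) : (d.append e).size = d.size + e.size :=
  (d.permCong_matWith_append e d.mu e.mu).size_eq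

end BlockLists

section Bundle

theorem PermCong.exists_isUnit_eq_mul_mul_transpose {n : ℕ} {A B : Matrix (Fin n) (Fin n) ℂ}
    (h : PermCong A B) : ∃ P, IsUnit P ∧ B = P * A * Pᵀ := by
  obtain ⟨σ, rfl⟩ := h
  refine ⟨Equiv.Perm.permMatrix ℂ σ⁻¹, (Group.isUnit σ).map permMatrixHom, ?_⟩
  rw [transpose_permMatrix, PEquiv.toMatrix_toPEquiv_mul, Equiv.Perm.permMatrix,
    PEquiv.mul_toMatrix_toPEquiv]
  simp [Equiv.Perm.inv_def]

theorem PermCong.mem_congBundle {d : CongData} {mu : Fin d.n3 → ℂ} (hmu : d.ParamsOK mu)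
    {M : Matrix (Fin d.size) (Fin d.size) ℂ} (h : PermCong (d.matWith mu) M) :
    M ∈ congBundle d :=
  let ⟨P, hP, hM⟩ := h.exists_isUnit_eq_mul_mul_transpose
  ⟨mu, P, hP, hmu, hM⟩

theorem mul_mul_transpose_mem_congBundle {d : CongData}
    {A P : Matrix (Fin d.size) (Fin d.size) ℂ} (hA : A ∈ congBundle d) (hP : IsUnit P) :
    P * A * Pᵀ ∈ congBundle d := by
  obtain ⟨mu, Q, hQ, hmu, rfl⟩ := hA
  exact ⟨mu, P * Q, hP.mul hQ, hmu, by simp only [transpose_mul, Matrix.mul_assoc]⟩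

theorem mul_mul_transpose_mem_closure_congBundle {d : CongData}
    {A P : Matrix (Fin d.size) (Fin d.size) ℂ} (hA : A ∈ closure (congBundle d))
    (hP : IsUnit P) :
    P * A * Pᵀ ∈ closure (congBundle d) := by
  exact map_mem_closure (f := fun X => P * X * Pᵀ) (by fun_prop) hA fun _ hB =>
    mul_mul_transpose_mem_congBundle hB hP

end Bundle

section Perturbation

open Filter Topology Set Real

theorem Preperfect.mem_closure_eqPattern_avoiding {X ι : Type*} [TopologicalSpace X]
    [T2Space X] [Finite ι] {T G : Set X} (hT : Preperfect T) (hG : G.Finite) {w : ι → X}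
    (hw : ∀ i, w i ∈ T) :
    w ∈ closure
      {ν : ι → X | (∀ i, ν i ∈ T \ G) ∧ ∀ i j, ν i = ν j ↔ w i = w j} := by
  have (v : range w) : NeBot (𝓝[≠] (v : X) ⊓ 𝓟 T) := by
    obtain ⟨_, i, rfl⟩ := v
    exact hT _ (hw i)
  -- each value `v` of `w` is perturbed independently inside `T \ {v}`; close enough to `w`,
  -- distinct values stay distinct
  let F : Filter (range w → X) := Filter.pi fun v => 𝓝[≠] (v : X) ⊓ 𝓟 T
  have hlim (v : range w) : Tendsto (fun f : range w → X => f v) F (𝓝 v) :=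
    (tendsto_eval_pi _ v).mono_right (inf_le_left.trans nhdsWithin_le_nhds)
  have hmem : ∀ᶠ f in F, ∀ v, f v ∈ T \ G := by
    refine eventually_all.2 fun v => (tendsto_eval_pi _ v).eventually ?_
    filter_upwards [mem_inf_of_right (mem_principal_self T),
      (hG.eventually_cofinite_notMem.filter_mono (nhdsNE_le_cofinite _)).filter_mono inf_le_left]
      with x hxT hxG using ⟨hxT, hxG⟩
  have hinj : ∀ᶠ f in F, Function.Injective f := by
    refine eventually_all.2 fun v => eventually_all.2 fun v' => ?_
    by_cases hvv : v = v'
    · exact Eventually.of_forall fun _ _ => hvv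
    · have hne : ((v : X), (v' : X)) ∈ (diagonal X)ᶜ := fun h => hvv (Subtype.ext h)
      exact ((hlim v).prodMk_nhds (hlim v')).eventually
        (isClosed_diagonal.isOpen_compl.mem_nhds hne) |>.mono fun _ h h' => absurd h' h
  refine mem_closure_of_tendsto (f := fun f i => f (rangeFactorization w i))
    (tendsto_pi_nhds.2 fun i => hlim _) ((hmem.and hinj).mono ?_)
  rintro f ⟨hf, hf_inj⟩
  exact ⟨fun i => hf _, fun i j => hf_inj.eq_iff.trans Subtype.ext_iff⟩

theorem preperfect_setOf_typeIIaParam : Preperfect {μ : ℂ | TypeIIaParam μ} := by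
  rintro μ (hμ | ⟨θ, hθ0, hθπ, rfl⟩)
  · exact ((isOpen_lt continuous_const continuous_norm).preperfect μ hμ).mono
      (principal_mono.2 fun _ => Or.inl)
  · let c : ℝ → ℂ := fun t => Complex.exp (t * Complex.I)
    have hc_inj : InjOn c (Ioo 0 π) := fun a ha b hb h =>
      Circle.exp_injOn_Ioc (by linarith [Real.pi_pos]) (Ioo_subset_Ioc_self ha)
        (Ioo_subset_Ioc_self hb) (Subtype.ext h)
    have hc : Continuous c := by fun_prop
    have hθ := accPt_iff_frequently.1 (isOpen_Ioo.preperfect θ ⟨hθ0, hθπ⟩)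
    refine accPt_iff_frequently.2 ((hc.tendsto θ).frequently (hθ.mono ?_))
    rintro t ⟨hne, ht⟩
    exact ⟨fun h => hne (hc_inj ht ⟨hθ0, hθπ⟩ h), Or.inr ⟨t, ht.1, ht.2, rfl⟩⟩

theorem CongData.ParamsOK.mem_closure_avoiding {d : CongData} {mu : Fin d.n3 → ℂ}
    (hmu : d.ParamsOK mu) {G : Set ℂ} (hG : G.Finite) :
    mu ∈ closure {nu | d.ParamsOK nu ∧ ∀ i, nu i ∉ G} := by
  refine closure_mono ?_ (preperfect_setOf_typeIIaParam.mem_closure_eqPattern_avoiding hG hmu.1)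
  rintro nu ⟨hnu, hpat⟩
  exact ⟨⟨fun i => (hnu i).1, fun i j => (not_congr (hpat i j)).trans (hmu.2 i j)⟩,
    fun i => (hnu i).2⟩

end Perturbation

section Continuity

variable {X : Type*} [TopologicalSpace X]

theorem Continuous.dsum {m n : ℕ} {A : X → Matrix (Fin m) (Fin m) ℂ}
    {B : X → Matrix (Fin n) (Fin n) ℂ} (hA : Continuous A) (hB : Continuous B) :
    Continuous fun x => dsum (A x) (B x) :=
  (hA.matrix_fromBlocks continuous_const continuous_const hB).matrix_reindex _ _

theorem Continuous.finDsum : ∀ {q : ℕ} {p : Fin q → ℕ}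
    {M : X → (i : Fin q) → Matrix (Fin (p i)) (Fin (p i)) ℂ},
    (∀ i, Continuous fun x => M x i) → Continuous fun x => finDsum p (M x)
  | 0, _, _, _ => continuous_const
  | _ + 1, _, _, hM => (hM 0).dsum (Continuous.finDsum fun i => hM i.succ)

theorem continuous_Jblock (k : ℕ) : Continuous (Jblock k) :=
  continuous_matrix fun i j => by
    simp only [Jblock, of_apply]
    split_ifs <;> fun_prop

theorem continuous_Hblock (k : ℕ) : Continuous (Hblock k) :=
  (continuous_const.matrix_fromBlocks continuous_const (continuous_Jblock k)
    continuous_const).matrix_reindex _ _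

theorem CongData.continuous_matWith (d : CongData) : Continuous d.matWith :=
  continuous_const.dsum <| continuous_const.dsum <|
    (Continuous.finDsum fun i => (continuous_Hblock _).comp (continuous_apply i)).dsum
      continuous_const

end Continuity

section DirectSum

variable {m n : ℕ}

theorem dsum_mul_mul_transpose (P A : Matrix (Fin m) (Fin m) ℂ)
    (Q B : Matrix (Fin n) (Fin n) ℂ) :
    dsum (P * A * Pᵀ) (Q * B * Qᵀ) = dsum P Q * dsum A B * (dsum P Q)ᵀ := by
  simp [dsum, fromBlocks_transpose, fromBlocks_multiply, submatrix_mul_equiv]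

theorem isUnit_dsum {P : Matrix (Fin m) (Fin m) ℂ} {Q : Matrix (Fin n) (Fin n) ℂ}
    (hP : IsUnit P) (hQ : IsUnit Q) : IsUnit (dsum P Q) := by
  rw [isUnit_iff_isUnit_det, dsum, det_reindex_self, det_fromBlocks_zero₂₁]
  exact (isUnit_iff_isUnit_det P |>.1 hP).mul (isUnit_iff_isUnit_det Q |>.1 hQ)

theorem reindex_mul_mul_transpose {α β : Type*} [Fintype α] [Fintype β] [DecidableEq α]
    [DecidableEq β] (e : α ≃ β) (P A : Matrix α α ℂ) :
    reindex e e (P * A * Pᵀ) = reindex e e P * reindex e e A * (reindex e e P)ᵀ := by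
  simp [submatrix_mul_equiv]

theorem CongData.ParamsOK.append {d e : CongData} {mu : Fin d.n3 → ℂ} {nu : Fin e.n3 → ℂ}
    (hmu : d.ParamsOK mu) (hnu : e.ParamsOK nu) (hsep : ∀ i j, mu i ≠ nu j)
    (hdisj : d.SH ∩ e.SH = ∅) : (d.append e).ParamsOK (Fin.append mu nu) := by
  have hSH (i j) : d.mu i ≠ e.mu j := fun h => hdisj.subset ⟨⟨i, rfl⟩, j, h.symm⟩
  refine ⟨Fin.addCases (by simpa using hmu.1) (by simpa using hnu.1), fun i j => ?_⟩
  refine Fin.addCases (fun i => Fin.addCases (fun j => ?_) (fun j => ?_) j)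
    (fun i => Fin.addCases (fun j => ?_) (fun j => ?_) j) i <;>
    simp [CongData.append, hmu.2, hnu.2, hsep, hSH, ne_comm]

theorem mem_closure_congBundle_append_of_matWith {d e : CongData} (hdisj : d.SH ∩ e.SH = ∅)
    {mu : Fin d.n3 → ℂ} {nu : Fin e.n3 → ℂ} (hmu : d.ParamsOK mu) (hnu : e.ParamsOK nu)
    {M : Matrix (Fin (d.append e).size) (Fin (d.append e).size) ℂ}
    (hM : PermCong (dsum (d.matWith mu) (e.matWith nu)) M) :
    M ∈ closure (congBundle (d.append e)) := by
  obtain ⟨σ, rfl⟩ := hM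
  -- once `nu` is moved off the values of `mu`, `Fin.append mu nu` is admissible for `d.append e`
  refine map_mem_closure (f := fun nu' => reindex σ σ (dsum (d.matWith mu) (e.matWith nu')))
    ((continuous_const.dsum e.continuous_matWith).matrix_reindex _ _)
    (hnu.mem_closure_avoiding (Set.finite_range mu)) ?_
  rintro nu' ⟨hnu', hsep⟩
  exact PermCong.mem_congBundle (hmu.append hnu' (fun i j h => hsep j ⟨i, h⟩) hdisj)
    ((d.permCong_matWith_append e mu nu').trans ⟨σ, rfl⟩)

theorem mem_closure_congBundle_append_of_mem {d e : CongData} (hdisj : d.SH ∩ e.SH = ∅)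
    {A : Matrix (Fin d.size) (Fin d.size) ℂ} {B : Matrix (Fin e.size) (Fin e.size) ℂ}
    (hA : A ∈ congBundle d) (hB : B ∈ congBundle e)
    {M : Matrix (Fin (d.append e).size) (Fin (d.append e).size) ℂ} (hM : PermCong (dsum A B) M) :
    M ∈ closure (congBundle (d.append e)) := by
  obtain ⟨mu, P, hP, hmu, rfl⟩ := hA
  obtain ⟨nu, Q, hQ, hnu, rfl⟩ := hB
  obtain ⟨σ, rfl⟩ := hM
  rw [dsum_mul_mul_transpose, reindex_mul_mul_transpose]
  exact mul_mul_transpose_mem_closure_congBundle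
    (mem_closure_congBundle_append_of_matWith hdisj hmu hnu ⟨σ, rfl⟩)
    ((isUnit_dsum hP hQ).map (reindexAlgEquiv ℂ ℂ σ))

theorem mem_closure_congBundle_append {d e : CongData} (hdisj : d.SH ∩ e.SH = ∅)
    {A : Matrix (Fin d.size) (Fin d.size) ℂ} {B : Matrix (Fin e.size) (Fin e.size) ℂ}
    (hA : A ∈ closure (congBundle d)) (hB : B ∈ closure (congBundle e))
    {M : Matrix (Fin (d.append e).size) (Fin (d.append e).size) ℂ} (hM : PermCong (dsum A B) M) :
    M ∈ closure (congBundle (d.append e)) := by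
  obtain ⟨σ, rfl⟩ := hM
  rw [← closure_closure (s := congBundle _)]
  exact map_mem_closure₂ (f := fun A B => reindex σ σ (dsum A B))
    ((continuous_fst.dsum continuous_snd).matrix_reindex _ _) hA hB
    fun _ hA _ hB => mem_closure_congBundle_append_of_mem hdisj hA hB ⟨σ, rfl⟩

end DirectSum

section Family

theorem CongData.SH_append_subset (d e : CongData) : (d.append e).SH ⊆ d.SH ∪ e.SH := by
  rintro _ ⟨i, rfl⟩
  refine Fin.addCases (fun i => Or.inl ⟨i, ?_⟩) (fun i => Or.inr ⟨i, ?_⟩) i <;>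
    simp [CongData.append]

theorem SH_appendAll_subset : ∀ {q : ℕ} (C : Fin q → CongData),
    (appendAll C).SH ⊆ ⋃ i, (C i).SH
  | 0, _ => by rintro _ ⟨i, rfl⟩; exact i.elim0
  | _ + 1, C => fun _ hx => by
    rcases CongData.SH_append_subset _ _ hx with hx | hx
    · exact Set.mem_iUnion.2 ⟨0, hx⟩
    · obtain ⟨i, hi⟩ := Set.mem_iUnion.1 (SH_appendAll_subset _ hx)
      exact Set.mem_iUnion.2 ⟨i.succ, hi⟩

theorem SH_inter_SH_appendAll_succ_eq_empty {q : ℕ} {C : Fin (q + 1) → CongData}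
    (hdisj : ∀ i j, i ≠ j → (C i).SH ∩ (C j).SH = ∅) :
    (C 0).SH ∩ (appendAll fun i => C i.succ).SH = ∅ := by
  refine Set.subset_empty_iff.1 fun x ⟨hx₀, hx⟩ => ?_
  obtain ⟨i, hi⟩ := Set.mem_iUnion.1 (SH_appendAll_subset _ hx)
  exact (hdisj 0 i.succ (Fin.succ_ne_zero i).symm).subset ⟨hx₀, hi⟩

end Family

theorem dsum_mem_closure_congBundle_of_mem_closure_general (q : ℕ) (C : Fin q → CongData)
    (A : (i : Fin q) → Matrix (Fin (C i).size) (Fin (C i).size) ℂ)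
    (hA : ∀ i, A i ∈ closure (congBundle (C i)))
    (hdisj : ∀ i j, i ≠ j → (C i).SH ∩ (C j).SH = ∅) :
    ∃ hsz : finSize (fun i => (C i).size) = (appendAll C).size,
      Matrix.reindex (finCongr hsz) (finCongr hsz) (finDsum (fun i => (C i).size) A) ∈
        closure (congBundle (appendAll C)) := by
  induction q with
  | zero =>
    exact ⟨rfl, subset_closure ⟨Fin.elim0, 1, isUnit_one,
      ⟨fun i => i.elim0, fun i => i.elim0⟩, ext fun i => i.elim0⟩⟩
  | succ q ih =>
    obtain ⟨h₁, hmem⟩ := ih (fun i => C i.succ) (fun i => A i.succ) (fun i => hA i.succ)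
      fun i j hij => hdisj _ _ ((Fin.succ_injective _).ne hij)
    have hsz : finSize (fun i => (C i).size) = (appendAll C).size :=
      (congrArg _ h₁).trans (CongData.size_append _ _).symm
    refine ⟨hsz, mem_closure_congBundle_append (SH_inter_SH_appendAll_succ_eq_empty hdisj)
      (hA 0) hmem ?_⟩
    exact ((PermCong.refl _).dsum_congr (PermCong.reindex_finCongr h₁).symm).trans
      (PermCong.reindex_finCongr hsz)

/-- **Lemma 3.7.**  If `A_i` belongs to the closure of `ℬᶜ(C_i)` and the Type II-(a)
parameter sets of the `C_i` are pairwise disjoint, then `A_1 ⊕ ⋯ ⊕ A_q` belongs to the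
closure of `ℬᶜ(C_1 ⊕ ⋯ ⊕ C_q)`. -/
theorem dsum_mem_closure_congBundle_of_mem_closure (q : ℕ) (C : Fin q → CongData)
    (hC : ∀ i, (C i).Valid)
    (A : (i : Fin q) → Matrix (Fin (C i).size) (Fin (C i).size) ℂ)
    (hA : ∀ i, A i ∈ closure (congBundle (C i)))
    (hdisj : ∀ i j, i ≠ j → (C i).SH ∩ (C j).SH = ∅) :
    ∃ hsz : finSize (fun i => (C i).size) = (appendAll C).size,
      Matrix.reindex (finCongr hsz) (finCongr hsz) (finDsum (fun i => (C i).size) A) ∈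
        closure (congBundle (appendAll C)) :=
  dsum_mem_closure_congBundle_of_mem_closure_general q C A hA hdisj
end
end

section
/- (Inclusion (4.4)–(4.5) from the proof of Theorem 4.1(a).) Let n ≥ 1 and let ℓ be an integer with 0 ≤ ℓ ≤ ⌊n/2⌋. Then the set { P (H_2(μ̃_1) ⊕ ⋯ ⊕ H_2(μ̃_ℓ) ⊕ I_{n−2ℓ}) Pᵀ : P ∈ ℂ^{n×n} invertible, each μ̃_i satisfying |μ̃_i| > 1 or μ̃_i = e^{iθ} with 0 < θ < π, and μ̃_i ≠ μ̃_{i'} for i ≠ i' } (i.e., the congruence bundle ℬᶜ(⊕_{i=1}^ℓ H_2(μ_i) ⊕ I_{n−2ℓ}) with pairwise distinct Type II-(a) parameters) is contained in the closure of the generic congruence bundle 𝒢. -/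
open Matrix

noncomputable section

/-- The `2 × 2` block `H_2(μ) = [[0, 1], [μ, 0]]`. -/
def H2 (μ : ℂ) : Matrix (Fin 2) (Fin 2) ℂ := !![0, 1; μ, 0]

/-- The block-diagonal direct sum `H_2(μ_1) ⊕ ⋯ ⊕ H_2(μ_r)`. -/
def pairH (r : ℕ) (mu : Fin r → ℂ) :
    Matrix (Fin (finSize fun _ : Fin r => 2)) (Fin (finSize fun _ : Fin r => 2)) ℂ :=
  finDsum (fun _ => 2) fun i => H2 (mu i)

/-- The generic congruence bundle `𝒢 ⊆ ℂ^{n×n}`: all matrices `P D Pᵀ` with `P`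
invertible, where `D = H_2(μ_1) ⊕ ⋯ ⊕ H_2(μ_{n/2})` when `n` is even and
`D = H_2(μ_1) ⊕ ⋯ ⊕ H_2(μ_{⌊n/2⌋}) ⊕ [1]` when `n` is odd, the parameters `μ_i` being
pairwise distinct Type II-(a) parameters. -/
def genCong (n : ℕ) : Set (Matrix (Fin n) (Fin n) ℂ) :=
  {A | (Even n ∧
      ∃ (h : finSize (fun _ : Fin (n / 2) => 2) = n) (mu : Fin (n / 2) → ℂ)
        (P : Matrix (Fin n) (Fin n) ℂ),
        IsUnit P ∧ (∀ i, TypeIIaParam (mu i)) ∧ (∀ i i', i ≠ i' → mu i ≠ mu i') ∧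
        A = P * Matrix.reindex (finCongr h) (finCongr h) (pairH (n / 2) mu) * Pᵀ) ∨
    (¬Even n ∧
      ∃ (h : finSize (fun _ : Fin (n / 2) => 2) + 1 = n) (mu : Fin (n / 2) → ℂ)
        (P : Matrix (Fin n) (Fin n) ℂ),
        IsUnit P ∧ (∀ i, TypeIIaParam (mu i)) ∧ (∀ i i', i ≠ i' → mu i ≠ mu i') ∧
        A = P * Matrix.reindex (finCongr h) (finCongr h)
              (dsum (pairH (n / 2) mu) !![(1 : ℂ)]) * Pᵀ)}

/-!
Over `ℂ` the block `H_2(1) = [[0, 1], [1, 0]]` is congruent to `I_2`, so up to congruence the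
identity part `I_{n-2ℓ}` may be replaced by `H_2(1) ⊕ ⋯ ⊕ H_2(1)` (followed by `[1]` when `n` is
odd). Moving these new parameters from `1` to `1 + (b + 1) t` with small `t > 0` gives real
parameters larger than `1`, pairwise distinct and different from the `μ_i` (none of which is `1`),
so the perturbed matrices lie in `𝒢` and converge to the given one as `t → 0⁺`. Since `𝒢` is
invariant under congruence, so is its closure, which reduces everything to the normal form.
-/

open Filter Topology

lemma finSize_two (r : ℕ) : finSize (fun _ : Fin r => 2) = r * 2 := by
  induction r with
  | zero => rfl
  | succ k ih =>
    change 2 + finSize (fun _ : Fin k => 2) = _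
    rw [ih]; ring

section dsum

variable {m n : ℕ}

lemma dsum_mul_dsum (A C : Matrix (Fin m) (Fin m) ℂ) (B D : Matrix (Fin n) (Fin n) ℂ) :
    dsum A B * dsum C D = dsum (A * C) (B * D) := by
  simp [dsum, fromBlocks_multiply]

lemma dsum_transpose (A : Matrix (Fin m) (Fin m) ℂ) (B : Matrix (Fin n) (Fin n) ℂ) :
    (dsum A B)ᵀ = dsum Aᵀ Bᵀ := by
  simp [dsum, fromBlocks_transpose]

lemma dsum_one : dsum (1 : Matrix (Fin m) (Fin m) ℂ) (1 : Matrix (Fin n) (Fin n) ℂ) = 1 := by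
  simp [dsum]

lemma continuous_dsum_left (B : Matrix (Fin n) (Fin n) ℂ) :
    Continuous fun A : Matrix (Fin m) (Fin m) ℂ => dsum A B :=
  (continuous_id.matrix_fromBlocks continuous_const continuous_const
    continuous_const).matrix_reindex _ _

lemma finSumFinEquiv_symm_eq_dite (i : Fin (m + n)) :
    finSumFinEquiv.symm i = if h : (i : ℕ) < m then Sum.inl ⟨i, h⟩
      else Sum.inr ⟨(i : ℕ) - m, by omega⟩ := by
  split_ifs with h
  · rw [Equiv.symm_apply_eq, finSumFinEquiv_apply_left]
    rfl
  · rw [Equiv.symm_apply_eq, finSumFinEquiv_apply_right]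
    ext
    simp only [Fin.val_natAdd]
    omega

lemma dsum_apply (A : Matrix (Fin m) (Fin m) ℂ) (B : Matrix (Fin n) (Fin n) ℂ)
    (i j : Fin (m + n)) :
    dsum A B i j = if h : (i : ℕ) < m then
        (if h' : (j : ℕ) < m then A ⟨i, h⟩ ⟨j, h'⟩ else 0)
      else if h' : (j : ℕ) < m then 0
        else B ⟨(i : ℕ) - m, by omega⟩ ⟨(j : ℕ) - m, by omega⟩ := by
  rw [dsum, reindex_apply, submatrix_apply, finSumFinEquiv_symm_eq_dite,
    finSumFinEquiv_symm_eq_dite]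
  split_ifs <;> rfl

end dsum

section blockPairs

variable {R : Type*} {k : ℕ}

def pairEquiv (k : ℕ) : Fin (k * 2) ≃ Fin 2 × Fin k :=
  finProdFinEquiv.symm.trans (Equiv.prodComm _ _)

def blockPairs [Zero R] (k : ℕ) (f : Fin k → Matrix (Fin 2) (Fin 2) R) :
    Matrix (Fin (k * 2)) (Fin (k * 2)) R :=
  (blockDiagonal f).submatrix (pairEquiv k) (pairEquiv k)

def pairEntry [Zero R] (f : Fin k → Matrix (Fin 2) (Fin 2) R) (i j : ℕ) : R :=
  if h : i / 2 = j / 2 ∧ i / 2 < k then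
    f ⟨i / 2, h.2⟩ ⟨i % 2, Nat.mod_lt _ two_pos⟩ ⟨j % 2, Nat.mod_lt _ two_pos⟩
  else 0

lemma blockPairs_apply [Zero R] (f : Fin k → Matrix (Fin 2) (Fin 2) R) (i j : Fin (k * 2)) :
    blockPairs k f i j = pairEntry f i j := by
  have hi : (i : ℕ) / 2 < k := by rw [Nat.div_lt_iff_lt_mul two_pos]; exact i.isLt
  simp only [blockPairs, pairEquiv, pairEntry, submatrix_apply, Equiv.trans_apply,
    finProdFinEquiv_symm_apply, Equiv.prodComm_apply, Prod.swap_prod_mk, blockDiagonal_apply,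
    Fin.ext_iff, Fin.coe_divNat]
  split_ifs with h h' h'
  · rfl
  · exact absurd ⟨h, hi⟩ h'
  · exact absurd h'.1 h
  · rfl

variable [Semiring R]

lemma blockPairs_mul (f g : Fin k → Matrix (Fin 2) (Fin 2) R) :
    blockPairs k f * blockPairs k g = blockPairs k (f * g) := by
  rw [blockPairs, blockPairs, submatrix_mul_equiv, ← blockDiagonal_mul]
  rfl

lemma blockPairs_transpose (f : Fin k → Matrix (Fin 2) (Fin 2) R) :
    (blockPairs k f)ᵀ = blockPairs k fun b => (f b)ᵀ := by
  simp [blockPairs, blockDiagonal_transpose]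

lemma blockPairs_one : blockPairs k (1 : Fin k → Matrix (Fin 2) (Fin 2) R) = 1 := by
  simp [blockPairs]

end blockPairs

lemma finDsum_two_apply : ∀ {r : ℕ} (M : Fin r → Matrix (Fin 2) (Fin 2) ℂ)
    (i j : Fin (finSize fun _ : Fin r => 2)), finDsum (fun _ => 2) M i j = pairEntry M i j
  | 0, _, i, _ => i.elim0
  | r + 1, M, i, j => by
    have hsize := finSize_two r
    refine (dsum_apply (M 0) (finDsum (fun _ : Fin r => 2) fun b => M b.succ) i j).trans ?_
    split_ifs with hi hj hj
    · rw [pairEntry, dif_pos (by omega)]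
      congr 1 <;> simp only [Fin.ext_iff, Fin.val_zero] <;> omega
    · rw [pairEntry, dif_neg (by omega)]
    · rw [pairEntry, dif_neg (by omega)]
    · rw [finDsum_two_apply, pairEntry, pairEntry]
      dsimp only
      split_ifs
      · congr 1 <;> simp only [Fin.ext_iff, Fin.val_succ] <;> omega
      · omega
      · omega
      · rfl

/-- `f 0 ⊕ ⋯ ⊕ f (⌊n/2⌋ - 1) ⊕ I_{n mod 2}`, the block `f b` sitting at the indices `2b, 2b + 1`. -/
def pairDiag (n : ℕ) (f : Fin (n / 2) → Matrix (Fin 2) (Fin 2) ℂ) : Matrix (Fin n) (Fin n) ℂ :=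
  reindex (finCongr (Nat.div_add_mod' n 2)) (finCongr (Nat.div_add_mod' n 2))
    (dsum (blockPairs (n / 2) f) 1)

section pairDiag

variable {n : ℕ}

lemma pairDiag_mul (f g : Fin (n / 2) → Matrix (Fin 2) (Fin 2) ℂ) :
    pairDiag n f * pairDiag n g = pairDiag n (f * g) := by
  simp only [pairDiag, reindex_apply, submatrix_mul_equiv, dsum_mul_dsum, blockPairs_mul, mul_one]

lemma pairDiag_transpose (f : Fin (n / 2) → Matrix (Fin 2) (Fin 2) ℂ) :
    (pairDiag n f)ᵀ = pairDiag n fun b => (f b)ᵀ := by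
  simp only [pairDiag, transpose_reindex, dsum_transpose, blockPairs_transpose, transpose_one]

lemma pairDiag_one : pairDiag n 1 = 1 := by
  simp only [pairDiag, blockPairs_one, dsum_one, reindex_apply, submatrix_one_equiv]

lemma pairDiag_mul_mul_transpose (Q f : Fin (n / 2) → Matrix (Fin 2) (Fin 2) ℂ) :
    pairDiag n Q * pairDiag n f * (pairDiag n Q)ᵀ =
      pairDiag n fun b => Q b * f b * (Q b)ᵀ := by
  rw [pairDiag_transpose, pairDiag_mul, pairDiag_mul]
  rfl

lemma isUnit_pairDiag {Q : Fin (n / 2) → Matrix (Fin 2) (Fin 2) ℂ} (hQ : ∀ b, IsUnit (Q b)) :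
    IsUnit (pairDiag n Q) := by
  refine IsUnit.of_mul_eq_one (pairDiag n fun b => (Q b)⁻¹) ?_
  rw [pairDiag_mul, ← pairDiag_one]
  congr 1
  funext b
  exact mul_nonsing_inv _ ((isUnit_iff_isUnit_det _).mp (hQ b))

lemma continuous_pairDiag : Continuous (pairDiag n) :=
  ((continuous_dsum_left 1).comp
    ((continuous_id.matrix_blockDiagonal).matrix_submatrix _ _)).matrix_reindex _ _

lemma pairDiag_apply (f : Fin (n / 2) → Matrix (Fin 2) (Fin 2) ℂ) (i j : Fin n) :
    pairDiag n f i j =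
      if (i : ℕ) < n / 2 * 2 then pairEntry f i j else if i = j then 1 else 0 := by
  rw [pairDiag, reindex_apply, submatrix_apply, dsum_apply]
  simp only [finCongr_symm, finCongr_apply, Fin.val_cast]
  split_ifs with hi hj hij hij
  · exact blockPairs_apply f _ _
  · rw [pairEntry, dif_neg (by omega)]
  · exact absurd (congrArg Fin.val hij) (by omega)
  · rfl
  all_goals simp only [one_apply, Fin.ext_iff, finCongr_symm, finCongr_apply, Fin.val_cast] at *
  · rw [if_pos (by omega)]
  · rw [if_neg (by omega)]

end pairDiag

lemma reindex_dsum_pairH_one {ℓ m n : ℕ} (h : finSize (fun _ : Fin ℓ => 2) + m = n)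
    (mu : Fin ℓ → ℂ) :
    reindex (finCongr h) (finCongr h) (dsum (pairH ℓ mu) (1 : Matrix (Fin m) (Fin m) ℂ)) =
      pairDiag n fun b => if hb : (b : ℕ) < ℓ then H2 (mu ⟨b, hb⟩) else 1 := by
  have hsize := finSize_two ℓ
  ext i j
  rw [reindex_apply, submatrix_apply, dsum_apply, pairDiag_apply]
  simp only [pairH, finDsum_two_apply, pairEntry, one_apply, Fin.ext_iff, finCongr_symm,
    finCongr_apply, Fin.val_cast]
  split_ifs <;> try first | rfl | omega
  all_goals simp only [one_apply, Fin.ext_iff]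
  · rw [if_pos (by omega)]
  · rw [if_neg (by omega)]

lemma reindex_pairH {n : ℕ} (h : finSize (fun _ : Fin (n / 2) => 2) = n)
    (mu : Fin (n / 2) → ℂ) :
    reindex (finCongr h) (finCongr h) (pairH (n / 2) mu) = pairDiag n fun b => H2 (mu b) := by
  have hsize := finSize_two (n / 2)
  ext i j
  rw [reindex_apply, submatrix_apply, pairDiag_apply, if_pos (by omega)]
  exact finDsum_two_apply _ _ _

lemma reindex_dsum_pairH_fin_one {n : ℕ} (h : finSize (fun _ : Fin (n / 2) => 2) + 1 = n)
    (mu : Fin (n / 2) → ℂ) :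
    reindex (finCongr h) (finCongr h) (dsum (pairH (n / 2) mu) !![(1 : ℂ)]) =
      pairDiag n fun b => H2 (mu b) := by
  rw [show !![(1 : ℂ)] = 1 by ext i j; fin_cases i; fin_cases j; rfl, reindex_dsum_pairH_one]
  simp only [Fin.is_lt, dif_pos, Fin.eta]

lemma TypeIIaParam.ne_one {μ : ℂ} (h : TypeIIaParam μ) : μ ≠ 1 := by
  rintro rfl
  rcases h with h | ⟨θ, h0, hπ, h1⟩
  · simp at h
  · have := congrArg Complex.im h1
    rw [Complex.one_im, Complex.exp_ofReal_mul_I_im] at this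
    exact (Real.sin_pos_of_pos_of_lt_pi h0 hπ).ne this

lemma pairDiag_H2_mem_genCong {n : ℕ} {mu : Fin (n / 2) → ℂ} (hmu : ∀ b, TypeIIaParam (mu b))
    (hinj : Function.Injective mu) : pairDiag n (fun b => H2 (mu b)) ∈ genCong n := by
  have hsize := finSize_two (n / 2)
  rcases Nat.even_or_odd' n with ⟨k, rfl | rfl⟩
  · refine Or.inl ⟨even_two_mul k, by omega, mu, 1, isUnit_one, hmu, fun _ _ => hinj.ne, ?_⟩
    rw [reindex_pairH, Matrix.one_mul, transpose_one, Matrix.mul_one]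
  · refine Or.inr ⟨Nat.not_even_two_mul_add_one k, by omega, mu, 1, isUnit_one, hmu,
      fun _ _ => hinj.ne, ?_⟩
    rw [reindex_dsum_pairH_fin_one, Matrix.one_mul, transpose_one, Matrix.mul_one]

lemma mul_mul_transpose_mem_genCong {n : ℕ} {P A : Matrix (Fin n) (Fin n) ℂ} (hP : IsUnit P)
    (hA : A ∈ genCong n) : P * A * Pᵀ ∈ genCong n := by
  rcases hA with ⟨hn, h, mu, Q, hQ, hmu, hdist, hA⟩ | ⟨hn, h, mu, Q, hQ, hmu, hdist, hA⟩
  · refine Or.inl ⟨hn, h, mu, P * Q, hP.mul hQ, hmu, hdist, ?_⟩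
    rw [hA, transpose_mul]
    simp only [Matrix.mul_assoc]
  · refine Or.inr ⟨hn, h, mu, P * Q, hP.mul hQ, hmu, hdist, ?_⟩
    rw [hA, transpose_mul]
    simp only [Matrix.mul_assoc]

lemma mul_mul_transpose_mem_closure_genCong {n : ℕ} {P A : Matrix (Fin n) (Fin n) ℂ}
    (hP : IsUnit P) (hA : A ∈ closure (genCong n)) : P * A * Pᵀ ∈ closure (genCong n) :=
  map_mem_closure (f := fun X => P * X * Pᵀ)
    ((continuous_const.matrix_mul continuous_id).matrix_mul continuous_const) hA
    fun _ hB => mul_mul_transpose_mem_genCong hP hB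

lemma exists_mul_H2_one_mul_transpose_eq_one :
    ∃ Q : Matrix (Fin 2) (Fin 2) ℂ, Q * H2 1 * Qᵀ = 1 := by
  refine ⟨!![1, 1 / 2; -Complex.I, Complex.I / 2], ?_⟩
  ext i j
  fin_cases i <;> fin_cases j <;> simp [H2, Matrix.mul_apply, Fin.sum_univ_two]
  · norm_num
  · ring
  · ring
  · linear_combination -Complex.I_sq

lemma continuous_H2 : Continuous H2 :=
  continuous_pi fun i => continuous_pi fun j => by
    fin_cases i <;> fin_cases j <;> simp only [H2] <;> fun_prop

def rayParams {ℓ : ℕ} (mu : Fin ℓ → ℂ) (k : ℕ) (t : ℝ) : Fin k → ℂ :=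
  fun b => if hb : (b : ℕ) < ℓ then mu ⟨b, hb⟩ else ((1 + ((b : ℕ) + 1) * t : ℝ) : ℂ)

lemma continuous_rayParams {ℓ : ℕ} (mu : Fin ℓ → ℂ) (k : ℕ) (b : Fin k) :
    Continuous fun t => rayParams mu k t b := by
  unfold rayParams
  split_ifs
  · exact continuous_const
  · fun_prop

lemma eventually_typeIIaParam_rayParams_injective {ℓ : ℕ} {mu : Fin ℓ → ℂ}
    (hmu : ∀ i, TypeIIaParam (mu i)) (hinj : Function.Injective mu) (k : ℕ) :
    ∀ᶠ t in 𝓝[>] 0,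
      (∀ b, TypeIIaParam (rayParams mu k t b)) ∧ Function.Injective (rayParams mu k t) := by
  have hray : ∀ b : ℕ, Tendsto (fun t : ℝ => ((1 + (b + 1) * t : ℝ) : ℂ)) (𝓝[>] 0) (𝓝 1) :=
    fun b => ((by fun_prop : Continuous fun t : ℝ => ((1 + (b + 1) * t : ℝ) : ℂ)).tendsto' 0 1
      (by simp)).mono_left nhdsWithin_le_nhds
  have havoid : ∀ᶠ t in 𝓝[>] (0 : ℝ), ∀ (b : Fin k) (i : Fin ℓ),
      ((1 + ((b : ℕ) + 1) * t : ℝ) : ℂ) ≠ mu i := by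
    simp only [eventually_all]
    exact fun b i => (hray b).eventually_ne (hmu i).ne_one.symm
  filter_upwards [self_mem_nhdsWithin, havoid] with t (ht : 0 < t) havoid
  refine ⟨fun b => ?_, fun b b' hbb' => ?_⟩
  · unfold rayParams
    split_ifs
    · exact hmu _
    · left
      rw [Complex.norm_real, Real.norm_eq_abs, abs_of_pos (by positivity)]
      linarith [mul_pos (by positivity : (0 : ℝ) < (b : ℕ) + 1) ht]
  · unfold rayParams at hbb'
    split_ifs at hbb'
    · exact Fin.ext (by simpa using congrArg Fin.val (hinj hbb'))
    · exact absurd hbb'.symm (havoid b' _)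
    · exact absurd hbb' (havoid b _)
    · have : ((b : ℕ) + 1 : ℝ) * t = ((b' : ℕ) + 1) * t :=
        add_left_cancel (Complex.ofReal_injective hbb')
      exact Fin.ext (by exact_mod_cast add_right_cancel (mul_right_cancel₀ ht.ne' this))

lemma pairDiag_H2_one_mem_closure_genCong {n ℓ : ℕ} {mu : Fin ℓ → ℂ}
    (hmu : ∀ i, TypeIIaParam (mu i)) (hinj : Function.Injective mu) :
    pairDiag n (fun b => if hb : (b : ℕ) < ℓ then H2 (mu ⟨b, hb⟩) else 1) ∈
      closure (genCong n) := by
  obtain ⟨Q₀, hQ₀⟩ := exists_mul_H2_one_mul_transpose_eq_one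
  let Q : Fin (n / 2) → Matrix (Fin 2) (Fin 2) ℂ := fun b => if (b : ℕ) < ℓ then 1 else Q₀
  have hQ : ∀ b, IsUnit (Q b) := fun b => by
    by_cases hb : (b : ℕ) < ℓ
    · simp [Q, hb]
    · simpa [Q, hb] using IsUnit.of_mul_eq_one _ ((Matrix.mul_assoc _ _ _).symm.trans hQ₀)
  let F : ℝ → Matrix (Fin n) (Fin n) ℂ := fun t =>
    pairDiag n Q * pairDiag n (fun b => H2 (rayParams mu (n / 2) t b)) * (pairDiag n Q)ᵀ
  have hF0 : F 0 = pairDiag n (fun b => if hb : (b : ℕ) < ℓ then H2 (mu ⟨b, hb⟩) else 1) := by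
    simp only [F, pairDiag_mul_mul_transpose]
    congr 1
    funext b
    by_cases hb : (b : ℕ) < ℓ
    · simp [Q, rayParams, hb]
    · simpa [Q, rayParams, hb] using hQ₀
  have hF : Continuous F :=
    (continuous_const.matrix_mul (continuous_pairDiag.comp (continuous_pi fun b =>
      continuous_H2.comp (continuous_rayParams mu _ b)))).matrix_mul continuous_const
  refine mem_closure_of_tendsto (b := 𝓝[>] (0 : ℝ))
    (hF0 ▸ (hF.tendsto 0).mono_left nhdsWithin_le_nhds) ?_
  filter_upwards [eventually_typeIIaParam_rayParams_injective hmu hinj (n / 2)]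
    with t ⟨hν, hνinj⟩
  exact mul_mul_transpose_mem_genCong (isUnit_pairDiag hQ) (pairDiag_H2_mem_genCong hν hνinj)

theorem congBundle_H2_id_subset_closure_genCong_general (n ℓ : ℕ) :
    {A : Matrix (Fin n) (Fin n) ℂ |
      ∃ (h : finSize (fun _ : Fin ℓ => 2) + (n - 2 * ℓ) = n)
        (mu : Fin ℓ → ℂ) (P : Matrix (Fin n) (Fin n) ℂ),
        IsUnit P ∧ (∀ i, TypeIIaParam (mu i)) ∧ (∀ i i', i ≠ i' → mu i ≠ mu i') ∧
        A = P * Matrix.reindex (finCongr h) (finCongr h)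
              (dsum (pairH ℓ mu) (1 : Matrix (Fin (n - 2 * ℓ)) (Fin (n - 2 * ℓ)) ℂ)) * Pᵀ}
      ⊆ closure (genCong n) := by
  rintro A ⟨h, mu, P, hP, hmu, hdist, rfl⟩
  rw [reindex_dsum_pairH_one h mu]
  exact mul_mul_transpose_mem_closure_genCong hP
    (pairDiag_H2_one_mem_closure_genCong hmu (Function.injective_iff_pairwise_ne.mpr hdist))

/-- **Inclusions (4.4)–(4.5).**  For `0 ≤ ℓ ≤ ⌊n/2⌋`, the congruence bundle
`ℬᶜ(H_2(μ_1) ⊕ ⋯ ⊕ H_2(μ_ℓ) ⊕ I_{n-2ℓ})` (with pairwise distinct Type II-(a)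
parameters) is contained in the closure of the generic congruence bundle `𝒢`. -/
theorem congBundle_H2_id_subset_closure_genCong (n ℓ : ℕ) (hn : 1 ≤ n)
    (hℓ : ℓ ≤ n / 2) :
    {A : Matrix (Fin n) (Fin n) ℂ |
      ∃ (h : finSize (fun _ : Fin ℓ => 2) + (n - 2 * ℓ) = n)
        (mu : Fin ℓ → ℂ) (P : Matrix (Fin n) (Fin n) ℂ),
        IsUnit P ∧ (∀ i, TypeIIaParam (mu i)) ∧ (∀ i i', i ≠ i' → mu i ≠ mu i') ∧
        A = P * Matrix.reindex (finCongr h) (finCongr h)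
              (dsum (pairH ℓ mu) (1 : Matrix (Fin (n - 2 * ℓ)) (Fin (n - 2 * ℓ)) ℂ)) * Pᵀ}
      ⊆ closure (genCong n) :=
  congBundle_H2_id_subset_closure_genCong_general n ℓ
end
end
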